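/- For distinct integers k, k' ≥ 1, the groups SE(2)_k and SE(2)_{k'}, modeled as (ℝ² × (ℝ/2πkℤ), ∗_k) and (ℝ² × (ℝ/2πk'ℤ), ∗_{k'}), are not isomorphic as groups. -/
import Mathlib


open Real

lemma cosPeriodic (k : ℕ) : Function.Periodic Real.cos (2 * π * k) := by
  simpa [mul_comm, mul_left_comm, mul_assoc] using Real.cos_periodic.nat_mul k

lemma sinPeriodic (k : ℕ) : Function.Periodic Real.sin (2 * π * k) := by
  simpa [mul_comm, mul_left_comm, mul_assoc] using Real.sin_periodic.nat_mul k

/-- Cosine, descended to `ℝ/2πkℤ` (well defined since `cos` is `2πk`-periodic). -/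
noncomputable def ccos (k : ℕ) : AddCircle (2 * π * (k : ℝ)) → ℝ := (cosPeriodic k).lift

/-- Sine, descended to `ℝ/2πkℤ` (well defined since `sin` is `2πk`-periodic). -/
noncomputable def csin (k : ℕ) : AddCircle (2 * π * (k : ℝ)) → ℝ := (sinPeriodic k).lift

/-- The underlying space `ℝ² × (ℝ/2πkℤ)` of the group `SE(2)_k`. -/
abbrev Gk (k : ℕ) : Type := (ℝ × ℝ) × AddCircle (2 * π * (k : ℝ))

/-- The group operation `∗_k` on `ℝ² × (ℝ/2πkℤ)`:
`((x,y),θ) ∗_k ((x',y'),θ') = ((x + x' cos θ − y' sin θ, y + x' sin θ + y' cos θ), θ + θ')`. -/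
noncomputable def gkMul (k : ℕ) (p q : Gk k) : Gk k :=
  ((p.1.1 + q.1.1 * ccos k p.2 - q.1.2 * csin k p.2,
    p.1.2 + q.1.1 * csin k p.2 + q.1.2 * ccos k p.2),
   p.2 + q.2)

lemma ccos_coe (k : ℕ) (x : ℝ) : ccos k (x : AddCircle (2 * π * (k : ℝ))) = Real.cos x :=
  (cosPeriodic k).lift_coe x

lemma csin_coe (k : ℕ) (x : ℝ) : csin k (x : AddCircle (2 * π * (k : ℝ))) = Real.sin x :=
  (sinPeriodic k).lift_coe x

/-- The "center" set of `Gk k`. -/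
def Zc (k : ℕ) : Set (Gk k) := {a | ∀ b, gkMul k a b = gkMul k b a}

lemma mem_Zc_iff (k : ℕ) (a : Gk k) :
    a ∈ Zc k ↔ a.1 = (0, 0) ∧
      a.2 ∈ AddSubgroup.zmultiples ((2 * π : ℝ) : AddCircle (2 * π * (k : ℝ))) := by
  constructor
  · intro h
    obtain ⟨⟨x, y⟩, θ⟩ := a
    have h1 := h ((0, 0), ((π : ℝ) : AddCircle (2 * π * (k : ℝ))))
    simp only [gkMul, Prod.mk.injEq, ccos_coe, csin_coe, Real.cos_pi, Real.sin_pi] at h1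
    obtain ⟨⟨hx, hy⟩, -⟩ := h1
    have hx0 : x = 0 := by nlinarith
    have hy0 : y = 0 := by nlinarith
    subst hx0; subst hy0
    have h2 := h ((1, 0), 0)
    have h0 : ((0 : ℝ) : AddCircle (2 * π * (k : ℝ))) = 0 := by norm_cast
    simp only [gkMul, Prod.mk.injEq, ← h0, ccos_coe, csin_coe, Real.cos_zero,
      Real.sin_zero] at h2
    obtain ⟨⟨hc, hs⟩, -⟩ := h2
    refine ⟨rfl, ?_⟩
    -- hc : 0 + 1 * ccos k θ - 0 * csin k θ = 1 + ...
    induction θ using QuotientAddGroup.induction_on with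
    | H x =>
      rw [ccos_coe] at hc
      have hcos : Real.cos x = 1 := by linarith [hc]
      obtain ⟨n, hn⟩ := (Real.cos_eq_one_iff x).mp hcos
      refine ⟨n, ?_⟩
      rw [← hn]
      push_cast
      rw [← QuotientAddGroup.mk_zsmul]
      norm_num [zsmul_eq_mul]
  · rintro ⟨h1, n, h2⟩
    intro b
    obtain ⟨⟨x, y⟩, θ⟩ := a
    simp only at h1
    have h2' : (n • ((2 * π : ℝ) : AddCircle (2 * π * (k : ℝ)))) = θ := h2
    have hcos : ccos k θ = 1 := by
      rw [← h2', ← QuotientAddGroup.mk_zsmul, ccos_coe]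
      simpa [zsmul_eq_mul, mul_comm] using Real.cos_int_mul_two_pi n
    have hsin : csin k θ = 0 := by
      rw [← h2', ← QuotientAddGroup.mk_zsmul, csin_coe]
      have h := Real.sin_int_mul_pi (2 * n)
      push_cast at h
      simp only [zsmul_eq_mul]
      rw [show (n : ℝ) * (2 * π) = 2 * (n : ℝ) * π by ring]
      exact h
    cases h1
    simp [gkMul, hcos, hsin, add_comm]

/-- For distinct `k, k' ≥ 1`, the groups
`SE(2)_k = (ℝ² × (ℝ/2πkℤ), ∗_k)` and `SE(2)_{k'} = (ℝ² × (ℝ/2πk'ℤ), ∗_{k'})` are not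
isomorphic as groups: there is no multiplication-preserving bijection between them. -/
theorem se2k_not_isomorphic (k k' : ℕ) (hk : 1 ≤ k) (hk' : 1 ≤ k') (hne : k ≠ k') :
    ¬ ∃ f : Gk k ≃ Gk k', ∀ a b : Gk k, f (gkMul k a b) = gkMul k' (f a) (f b) := by
  rintro ⟨f, hf⟩
  -- f maps Zc k bijectively onto Zc k'
  have hZ : ∀ a : Gk k, a ∈ Zc k ↔ f a ∈ Zc k' := by
    intro a
    constructor
    · intro ha b'
      obtain ⟨b, rfl⟩ := f.surjective b'
      rw [← hf, ← hf, ha b]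
    · intro ha b
      apply f.injective
      rw [hf, hf, ha (f b)]
  have hcard : Nat.card (Zc k) = Nat.card (Zc k') :=
    Nat.card_congr (f.subtypeEquiv hZ)
  -- compute each cardinality
  have key : ∀ m : ℕ, 1 ≤ m → Nat.card (Zc m) = m := by
    intro m hm
    haveI : Fact (0 < 2 * π * (m : ℝ)) := ⟨by positivity⟩
    have e : Zc m ≃ AddSubgroup.zmultiples ((2 * π : ℝ) : AddCircle (2 * π * (m : ℝ))) :=
      { toFun := fun a => ⟨a.1.2, ((mem_Zc_iff m a.1).mp a.2).2⟩
        invFun := fun θ => ⟨((0, 0), θ.1), (mem_Zc_iff m _).mpr ⟨rfl, θ.2⟩⟩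
        left_inv := fun a => by
          have := ((mem_Zc_iff m a.1).mp a.2).1
          ext <;> simp [this]
        right_inv := fun θ => rfl }
    rw [Nat.card_congr e, Nat.card_zmultiples]
    have h2π : (2 * π : ℝ) = (2 * π * (m : ℝ)) / (m : ℕ) := by
      have hm0 : (m : ℝ) ≠ 0 := by positivity
      field_simp
    have hx : ((2 * π : ℝ) : AddCircle (2 * π * (m : ℝ)))
        = ((2 * π * (m : ℝ) / (m : ℕ) : ℝ) : AddCircle (2 * π * (m : ℝ))) := by
      exact_mod_cast congrArg (fun x : ℝ => (x : AddCircle (2 * π * (m : ℝ)))) h2π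
    rw [hx]
    exact AddCircle.addOrderOf_period_div (p := 2 * π * (m : ℝ)) hm
  rw [key k hk, key k' hk'] at hcard
  exact hne hcard
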